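/- Let ω be a modulus of continuity of order n ∈ ℕ, let D ⊆ ℝ^d be a domain, let f ∈ L¹_loc(D) with ‖f‖_{ω,D} < ∞, and let C₀ > 0. Then there exists a constant C = C(n,d,C₀,ω) such that for all cubes Q₁ ⊂ Q₂ ⊂ 4Q₁ contained in D and all polynomials P_{Q₁}, P_{Q₂} ∈ 𝒫_n of near best approximation with constant C₀ for f on Q₁ and Q₂ respectively, one has (1/|Q₂|)·∫_{Q₂} |P_{Q₁} − P_{Q₂}| dx ≤ C·ω(ℓ(Q₂))·‖f‖_{ω,D}. -/

import Mathlib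

open MeasureTheory Filter Set Metric
open scoped ENNReal Topology InnerProductSpace

noncomputable section

/-- The axis-parallel closed cube in `ℝ^d` with center `x₀` and side length `l`. -/
def cube {d : ℕ} (x₀ : EuclideanSpace ℝ (Fin d)) (l : ℝ) : Set (EuclideanSpace ℝ (Fin d)) :=
  {x | ∀ i, |x i - x₀ i| ≤ l / 2}

/-- `𝒫_n`: functions on `ℝ^d` given by polynomials of total degree at most `n`. -/
def PolyLE (d n : ℕ) : Set (EuclideanSpace ℝ (Fin d) → ℝ) :=
  {P | ∃ p : MvPolynomial (Fin d) ℝ, p.totalDegree ≤ n ∧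
    ∀ x, MvPolynomial.eval (fun i => x i) p = P x}

/-- The Campanato-type Zygmund seminorm `‖f‖_{ω,D}` (valued in `ℝ≥0∞`). -/
def zygSeminorm {d : ℕ} (ω : ℝ → ℝ) (n : ℕ) (D : Set (EuclideanSpace ℝ (Fin d)))
    (f : EuclideanSpace ℝ (Fin d) → ℝ) : ℝ≥0∞ :=
  ⨆ (x₀ : EuclideanSpace ℝ (Fin d)) (l : ℝ) (_ : 0 < l) (_ : cube x₀ l ⊆ D),
    ⨅ (P : EuclideanSpace ℝ (Fin d) → ℝ) (_ : P ∈ PolyLE d n),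
      (ENNReal.ofReal (ω l * l ^ d))⁻¹ * ∫⁻ x in cube x₀ l, ENNReal.ofReal |f x - P x|

/-- The `L¹(D)` norm (valued in `ℝ≥0∞`). -/
def l1Norm {d : ℕ} (D : Set (EuclideanSpace ℝ (Fin d)))
    (f : EuclideanSpace ℝ (Fin d) → ℝ) : ℝ≥0∞ :=
  ∫⁻ x in D, ENNReal.ofReal |f x|

/-- The two regularity conditions of order `m` for a modulus of continuity:
`ω(t)/t^q` almost decreasing for some `m ≤ q < m+1`, and `ω(t)/t^r` almost
increasing for some `m-1 < r < m`. -/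
def ModulusConds (ω : ℝ → ℝ) (m : ℕ) : Prop :=
  (∃ q : ℝ, (m : ℝ) ≤ q ∧ q < (m : ℝ) + 1 ∧ ∃ C : ℝ, 0 < C ∧
      ∀ s t : ℝ, 1 < s → 0 < t → ω (s * t) ≤ C * s ^ q * ω t) ∧
  (∃ r : ℝ, (m : ℝ) - 1 < r ∧ r < (m : ℝ) ∧ ∃ C : ℝ, 0 < C ∧
      ∀ s t : ℝ, 0 < s → s < 1 → 0 < t → ω (s * t) ≤ C * s ^ r * ω t)

/-- `ω` is a modulus of continuity of order `n`: continuous, increasing, `ω(0)=0`,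
nonnegative, and `n` is the smallest positive integer satisfying the two
regularity conditions. -/
structure IsModulusOfOrder (ω : ℝ → ℝ) (n : ℕ) : Prop where
  continuousOn : ContinuousOn ω (Set.Ici 0)
  monotoneOn : MonotoneOn ω (Set.Ici 0)
  nonneg : ∀ t, 0 ≤ t → 0 ≤ ω t
  map_zero : ω 0 = 0
  npos : 0 < n
  conds : ModulusConds ω n
  minimal : ∀ m : ℕ, 0 < m → ModulusConds ω m → n ≤ m

/-- `ξ(r) = ∫_r^1 ω(t) t^{-n-1} dt`. -/
def xi (ω : ℝ → ℝ) (n : ℕ) (r : ℝ) : ℝ :=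
  ∫ t in Set.Ioc r 1, ω t / t ^ (n + 1)

/-- The associated modulus of continuity `ω̃(x) = ω(x)/max{1, ξ(x)}`. -/
def omegaTilde (ω : ℝ → ℝ) (n : ℕ) (x : ℝ) : ℝ :=
  ω x / max 1 (xi ω n x)

/-- `D ⊂ ℝ^d` is a bounded Lipschitz domain: it is open, connected, bounded, and near
every boundary point, after a rigid motion, it coincides inside an `R`-window with the
region above the graph of a Lipschitz function (with Lipschitz constant at most `δ`). -/
def IsLipschitzDomain {d : ℕ} (D : Set (EuclideanSpace ℝ (Fin d))) : Prop :=
  IsOpen D ∧ IsConnected D ∧ Bornology.IsBounded D ∧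
  ∃ δ R : ℝ, 0 < δ ∧ 0 < R ∧
    ∀ a ∈ frontier D,
      ∃ (g : EuclideanSpace ℝ (Fin d) ≃ᵢ EuclideanSpace ℝ (Fin d)) (j : Fin d)
        (A : EuclideanSpace ℝ (Fin d) → ℝ),
        g a = 0 ∧
        LipschitzWith (Real.toNNReal δ) A ∧
        (∀ x y : EuclideanSpace ℝ (Fin d), (∀ i, i ≠ j → x i = y i) → A x = A y) ∧
        (g '' D) ∩ cube 0 R = {x ∈ cube (0 : EuclideanSpace ℝ (Fin d)) R | A x < x j}

/-- `Ω` is the density of a `C^k`-smooth homogeneous Calderón–Zygmund kernel: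
homogeneous of degree `0`, `C^k` away from the origin, with zero mean on the
unit sphere. -/
structure IsCZDensity (d : ℕ) (k : ℕ∞) (Ω : EuclideanSpace ℝ (Fin d) → ℝ) : Prop where
  homog : ∀ c : ℝ, 0 < c → ∀ x : EuclideanSpace ℝ (Fin d), Ω (c • x) = Ω x
  smooth : ContDiffOn ℝ k Ω {x : EuclideanSpace ℝ (Fin d) | x ≠ 0}
  meanZero : ∫ x : Metric.sphere (0 : EuclideanSpace ℝ (Fin d)) 1,
      Ω x ∂((volume : Measure (EuclideanSpace ℝ (Fin d))).toSphere) = 0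

/-- `g = T_D f`: `g` vanishes off `D` and, for a.e. `y ∈ D`, `g y` is the principal
value `lim_{ε→0+} ∫_{x ∈ D, |y-x|>ε} f(x) K(y-x) dx` (here `f` is implicitly
multiplied by `χ_D`). -/
def IsRestrictedCZ {d : ℕ} (D : Set (EuclideanSpace ℝ (Fin d)))
    (K : EuclideanSpace ℝ (Fin d) → ℝ) (f g : EuclideanSpace ℝ (Fin d) → ℝ) : Prop :=
  (∀ y, y ∉ D → g y = 0) ∧
  ∀ᵐ y ∂(volume.restrict D),
    Tendsto (fun ε : ℝ => ∫ x in {x ∈ D | ε < dist y x}, f x * K (y - x))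
      (𝓝[>] (0 : ℝ)) (𝓝 (g y))

/-- `P` is a polynomial of near best approximation (with constant `C₀`) for `f`
on the cube with center `x₀` and side length `l`. -/
def IsNearBestApprox {d : ℕ} (ω : ℝ → ℝ) (n : ℕ) (D : Set (EuclideanSpace ℝ (Fin d)))
    (f : EuclideanSpace ℝ (Fin d) → ℝ) (C₀ : ℝ) (x₀ : EuclideanSpace ℝ (Fin d)) (l : ℝ)
    (P : EuclideanSpace ℝ (Fin d) → ℝ) : Prop :=
  P ∈ PolyLE d n ∧
    (ENNReal.ofReal (l ^ d))⁻¹ * ∫⁻ x in cube x₀ l, ENNReal.ofReal |f x - P x| ≤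
      ENNReal.ofReal (C₀ * ω l) * zygSeminorm ω n D f


/-!
Both polynomials approximate `f` on the smaller cube `Q₁`, so by the triangle inequality
`∫_{Q₁} |P₁ - P₂| ≤ 2 C₀ |Q₂| ω(ℓ(Q₂)) ‖f‖_{ω,D}` (using `ℓ(Q₁) ≤ ℓ(Q₂)` and monotonicity of `ω`).
Passing from `Q₁` to `Q₂ ⊆ 4Q₁` costs only a constant: on the finite-dimensional space `𝒫_n`
the seminorms `P ↦ ∫_{[-2,2]^d} |P|` and `P ↦ ∫_{[-1/2,1/2]^d} |P|` are continuous,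
homogeneous, and the second is positive definite, so they are comparable by compactness of the
unit sphere; an affine change of variables, which preserves `𝒫_n`, moves this to any cube.
-/

open MvPolynomial Module

lemma exists_le_mul_of_homogeneous {E : Type*} [NormedAddCommGroup E] [NormedSpace ℝ E]
    [FiniteDimensional ℝ E] {p q : E → ℝ} (hp : Continuous p) (hq : Continuous q)
    (hp_smul : ∀ (t : ℝ) x, p (t • x) = |t| * p x) (hq_smul : ∀ (t : ℝ) x, q (t • x) = |t| * q x)
    (hq_pos : ∀ x, x ≠ 0 → 0 < q x) : ∃ C, 0 < C ∧ ∀ x, p x ≤ C * q x := by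
  obtain ⟨M, hM⟩ := (isCompact_sphere (0 : E) 1).exists_bound_of_continuousOn hp.continuousOn
  obtain ⟨m, hm, hqm⟩ := (isCompact_sphere (0 : E) 1).exists_forall_le' hq.continuousOn
    fun u hu => hq_pos u (ne_zero_of_mem_unit_sphere ⟨u, hu⟩)
  refine ⟨max M 1 / m, by positivity, fun x => ?_⟩
  rcases eq_or_ne x 0 with rfl | hx
  · have hp0 := hp_smul 0 0
    have hq0 := hq_smul 0 0
    simp only [zero_smul, abs_zero, zero_mul] at hp0 hq0
    rw [hp0, hq0, mul_zero]
  set u := ‖x‖⁻¹ • x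
  have hu : u ∈ sphere (0 : E) 1 := by simp [u, norm_smul, hx]
  have hxu : x = ‖x‖ • u := by simp [u, smul_smul, hx]
  rw [hxu, hp_smul, hq_smul, abs_norm]
  have hpu : p u ≤ max M 1 := (le_abs_self _).trans ((hM u hu).trans (le_max_left _ _))
  calc ‖x‖ * p u ≤ ‖x‖ * max M 1 := by gcongr
    _ = max M 1 / m * (‖x‖ * m) := by field_simp
    _ ≤ max M 1 / m * (‖x‖ * q u) := by gcongr; exact hqm u hu

lemma MvPolynomial.totalDegree_bind₁_le {σ τ R : Type*} [CommSemiring R]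
    {g : σ → MvPolynomial τ R} {k : ℕ} (hg : ∀ i, (g i).totalDegree ≤ k) (p : MvPolynomial σ R) :
    (bind₁ g p).totalDegree ≤ p.totalDegree * k := by
  rw [← aeval_eq_bind₁, aeval_def, eval₂_eq]
  refine (totalDegree_finsetSum _ _).trans (Finset.sup_le fun s hs => ?_)
  have hprod : (∏ i ∈ s.support, g i ^ s i).totalDegree ≤ ∑ i ∈ s.support, s i * k :=
    (totalDegree_finsetProd _ _).trans <| Finset.sum_le_sum fun i _ =>
      (totalDegree_pow _ _).trans (Nat.mul_le_mul_left _ (hg i))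
  calc (algebraMap R _ (coeff s p) * ∏ i ∈ s.support, g i ^ s i).totalDegree
      ≤ (algebraMap R (MvPolynomial τ R) (coeff s p)).totalDegree +
          (∏ i ∈ s.support, g i ^ s i).totalDegree := totalDegree_mul _ _
    _ ≤ 0 + ∑ i ∈ s.support, s i * k := by
        rw [MvPolynomial.algebraMap_eq, totalDegree_C]
        exact Nat.add_le_add_left hprod 0
    _ ≤ p.totalDegree * k := by
        rw [zero_add, ← Finset.sum_mul]
        exact Nat.mul_le_mul_right _ (le_totalDegree hs)

section Development

variable {d n : ℕ}

lemma continuous_of_mem_polyLE {P : EuclideanSpace ℝ (Fin d) → ℝ} (hP : P ∈ PolyLE d n) :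
    Continuous P := by
  obtain ⟨p, -, hp⟩ := hP
  rw [← funext hp]
  exact (continuous_eval p).comp (PiLp.continuous_ofLp 2 _)

lemma sub_mem_polyLE {P Q : EuclideanSpace ℝ (Fin d) → ℝ} (hP : P ∈ PolyLE d n)
    (hQ : Q ∈ PolyLE d n) : (fun x => P x - Q x) ∈ PolyLE d n := by
  obtain ⟨p, hpn, hp⟩ := hP
  obtain ⟨q, hqn, hq⟩ := hQ
  refine ⟨p - q, (totalDegree_sub p q).trans (max_le hpn hqn), fun x => ?_⟩
  simp [hp, hq]

lemma const_mem_polyLE (c : ℝ) : (fun _ : EuclideanSpace ℝ (Fin d) => c) ∈ PolyLE d n :=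
  ⟨C c, by simp [totalDegree_C], fun _ => eval_C c⟩

lemma comp_affine_mem_polyLE {P : EuclideanSpace ℝ (Fin d) → ℝ} (hP : P ∈ PolyLE d n)
    (a : EuclideanSpace ℝ (Fin d)) (c : ℝ) : (fun y => P (a + c • y)) ∈ PolyLE d n := by
  obtain ⟨p, hpn, hp⟩ := hP
  have hdeg : ∀ i, (C (a i) + C c * X i : MvPolynomial (Fin d) ℝ).totalDegree ≤ 1 := fun i =>
    (totalDegree_add _ _).trans <| max_le (by simp [totalDegree_C]) <|
      (totalDegree_mul _ _).trans (by simp [totalDegree_C, totalDegree_X])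
  refine ⟨bind₁ (fun i => C (a i) + C c * X i) p, ?_, fun y => ?_⟩
  · exact (totalDegree_bind₁_le hdeg p).trans (by simpa using hpn)
  · show _ = P (a + c • y)
    rw [← hp (a + c • y), eval, eval₂Hom_bind₁, eval]
    congr 2 with i
    simp

lemma cube_eq_preimage_pi (x₀ : EuclideanSpace ℝ (Fin d)) (l : ℝ) :
    cube x₀ l = WithLp.ofLp ⁻¹' univ.pi fun i => Icc (x₀ i - l / 2) (x₀ i + l / 2) := by
  ext x
  simp only [cube, abs_le, mem_ofPred_eq, mem_preimage, Set.mem_pi, mem_univ, mem_Icc,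
    forall_const, sub_le_iff_le_add, neg_le_sub_iff_le_add]
  exact forall_congr' fun i => and_congr (by rw [add_comm]) (by rw [add_comm])

lemma isCompact_cube (x₀ : EuclideanSpace ℝ (Fin d)) (l : ℝ) : IsCompact (cube x₀ l) := by
  rw [cube_eq_preimage_pi]
  exact (PiLp.homeomorph 2 _).isCompact_preimage.2 (isCompact_univ_pi fun _ => isCompact_Icc)

lemma measurableSet_cube (x₀ : EuclideanSpace ℝ (Fin d)) (l : ℝ) : MeasurableSet (cube x₀ l) :=
  (isCompact_cube x₀ l).isClosed.measurableSet

lemma le_of_cube_subset_cube (hd : 0 < d) {x₁ x₂ : EuclideanSpace ℝ (Fin d)} {l₁ l₂ : ℝ}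
    (hl₁ : 0 ≤ l₁) (h : cube x₁ l₁ ⊆ cube x₂ l₂) : l₁ ≤ l₂ := by
  have hcorner : ∀ σ : ℝ, |σ| = 1 → WithLp.toLp 2 (fun j => x₁ j + σ * (l₁ / 2)) ∈ cube x₁ l₁ :=
    fun σ hσ j => by simp [abs_mul, hσ, abs_of_nonneg (by positivity : 0 ≤ l₁ / 2)]
  have hright := abs_le.1 (h (hcorner 1 (by norm_num)) ⟨0, hd⟩)
  have hleft := abs_le.1 (h (hcorner (-1) (by norm_num)) ⟨0, hd⟩)
  linarith [hright.2, hleft.1]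

lemma preimage_affine_cube (x₀ : EuclideanSpace ℝ (Fin d)) {l : ℝ} (hl : 0 < l) (s : ℝ) :
    (fun y => x₀ + l • y) ⁻¹' cube x₀ (l * s) = cube 0 s := by
  ext y
  simp only [cube, mem_preimage, mem_ofPred_eq, PiLp.add_apply, PiLp.smul_apply, smul_eq_mul,
    add_sub_cancel_left, PiLp.zero_apply, sub_zero, abs_mul, abs_of_pos hl, mul_div_assoc]
  exact forall_congr' fun i => mul_le_mul_iff_right₀ hl

lemma map_add_smul_addHaar {E : Type*} [NormedAddCommGroup E] [NormedSpace ℝ E]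
    [MeasurableSpace E] [BorelSpace E] [FiniteDimensional ℝ E] (μ : Measure E)
    [μ.IsAddHaarMeasure] (a : E) {r : ℝ} (hr : r ≠ 0) :
    μ.map (fun y => a + r • y) = ENNReal.ofReal |(r ^ finrank ℝ E)⁻¹| • μ := by
  have hcomp : (fun y => a + r • y) = (a + ·) ∘ (r • ·) := rfl
  rw [hcomp, ← Measure.map_map (measurable_const_add a) (measurable_const_smul r),
    Measure.map_addHaar_smul μ hr, Measure.map_smul, map_add_left_eq_self]

lemma setLIntegral_cube_eq_rescale (x₀ : EuclideanSpace ℝ (Fin d)) {l : ℝ} (hl : 0 < l) (s : ℝ)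
    {g : EuclideanSpace ℝ (Fin d) → ℝ≥0∞} (hg : Measurable g) :
    ∫⁻ x in cube x₀ (l * s), g x = ENNReal.ofReal (l ^ d) * ∫⁻ y in cube 0 s, g (x₀ + l • y) := by
  have hΦ : Measurable fun y : EuclideanSpace ℝ (Fin d) => x₀ + l • y := by fun_prop
  rw [← preimage_affine_cube x₀ hl, ← setLIntegral_map (measurableSet_cube _ _) hg hΦ,
    map_add_smul_addHaar _ _ hl.ne', Measure.restrict_smul, lintegral_smul_measure, smul_eq_mul,
    ← mul_assoc, finrank_euclideanSpace_fin, abs_of_pos (by positivity),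
    ← ENNReal.ofReal_mul (by positivity), mul_inv_cancel₀ (by positivity), ENNReal.ofReal_one,
    one_mul]

section Coordinates

variable {ι : Type*} [Fintype ι] (b : Basis ι ℝ (restrictTotalDegree (Fin d) ℝ n))

def polyOfCoords (c : ι → ℝ) (x : EuclideanSpace ℝ (Fin d)) : ℝ :=
  eval (fun i => x i) (b.equivFun.symm c : MvPolynomial (Fin d) ℝ)

lemma polyOfCoords_eq_sum (c : ι → ℝ) (x : EuclideanSpace ℝ (Fin d)) :
    polyOfCoords b c x = ∑ j, c j * eval (fun i => x i) (b j : MvPolynomial (Fin d) ℝ) := by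
  simp [polyOfCoords, Basis.equivFun_symm_apply, smul_eval]

lemma continuous_polyOfCoords : Continuous (Function.uncurry (polyOfCoords b)) := by
  simp only [Function.uncurry_def, polyOfCoords_eq_sum]
  exact continuous_finsetSum _ fun j _ => ((continuous_apply j).comp continuous_fst).mul
    ((continuous_eval _).comp ((PiLp.continuous_ofLp 2 _).comp continuous_snd))

lemma continuous_polyOfCoords_apply (c : ι → ℝ) : Continuous (polyOfCoords b c) := by
  simp only [funext (polyOfCoords_eq_sum b c)]
  exact continuous_finsetSum _ fun j _ => continuous_const.mul
    ((continuous_eval _).comp (PiLp.continuous_ofLp 2 _))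

lemma polyOfCoords_smul (t : ℝ) (c : ι → ℝ) (x : EuclideanSpace ℝ (Fin d)) :
    polyOfCoords b (t • c) x = t * polyOfCoords b c x := by
  simp [polyOfCoords, smul_eval]

lemma exists_polyOfCoords_eq {P : EuclideanSpace ℝ (Fin d) → ℝ} (hP : P ∈ PolyLE d n) :
    ∃ c, polyOfCoords b c = P := by
  obtain ⟨p, hpn, hp⟩ := hP
  refine ⟨b.equivFun ⟨p, (mem_restrictTotalDegree _ _ _).2 hpn⟩, funext fun x => ?_⟩
  simp [polyOfCoords, hp]

lemma eq_zero_of_polyOfCoords_eq_zero {c : ι → ℝ}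
    (h : ∀ x : EuclideanSpace ℝ (Fin d), x.ofLp ∈ univ.pi (fun _ => Ioo (-(1 / 2)) (1 / 2)) →
      polyOfCoords b c x = 0) : c = 0 := by
  have hp : (b.equivFun.symm c : MvPolynomial (Fin d) ℝ) = 0 :=
    funext_set (fun _ => Ioo (-(1 / 2) : ℝ) (1 / 2)) (fun _ => Ioo_infinite (by norm_num))
      fun v hv => by rw [map_zero]; exact h (WithLp.toLp 2 v) hv
  exact b.equivFun.symm.injective <| by rw [map_zero]; exact Subtype.ext hp

lemma integral_abs_polyOfCoords_pos {c : ι → ℝ} (hc : c ≠ 0) :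
    0 < ∫ x in cube 0 1, |polyOfCoords b c x| := by
  have hcont : Continuous (polyOfCoords b c) := continuous_polyOfCoords_apply b c
  refine (integral_nonneg fun _ => abs_nonneg _).lt_of_ne fun h => hc ?_
  have hae := (setIntegral_eq_zero_iff_of_nonneg_ae (ae_of_all _ fun _ => abs_nonneg _)
    (hcont.abs.continuousOn.integrableOn_compact (isCompact_cube 0 1))).1 h.symm
  set U : Set (EuclideanSpace ℝ (Fin d)) :=
    WithLp.ofLp ⁻¹' univ.pi (fun _ => Ioo (-(1 / 2)) (1 / 2))
  have hU : IsOpen U :=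
    (isOpen_set_pi finite_univ fun _ _ => isOpen_Ioo).preimage (PiLp.continuous_ofLp 2 _)
  have hUcube : U ⊆ cube 0 1 := by
    rw [cube_eq_preimage_pi]
    refine preimage_mono (pi_mono fun i _ => ?_)
    simpa using Ioo_subset_Icc_self
  have hzero := Measure.eqOn_open_of_ae_eq (ae_restrict_of_ae_restrict_of_subset hUcube hae) hU
    hcont.abs.continuousOn continuousOn_const
  exact eq_zero_of_polyOfCoords_eq_zero b fun x hx => abs_eq_zero.1 (hzero hx)

end Coordinates

lemma exists_lintegral_cube_four_le (d n : ℕ) : ∃ C : ℝ, 0 < C ∧ ∀ P ∈ PolyLE d n,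
    ∫⁻ x in cube 0 4, ENNReal.ofReal |P x| ≤
      ENNReal.ofReal C * ∫⁻ x in cube 0 1, ENNReal.ofReal |P x| := by
  let b := finBasis ℝ (restrictTotalDegree (Fin d) ℝ n)
  let I : ℝ → (Fin (finrank ℝ (restrictTotalDegree (Fin d) ℝ n)) → ℝ) → ℝ :=
    fun s c => ∫ x in cube 0 s, |polyOfCoords b c x|
  have hcont (s : ℝ) : Continuous (I s) :=
    continuous_parametric_integral_of_continuous (continuous_polyOfCoords b).abs
      (isCompact_cube 0 s)
  have hsmul (s t : ℝ) (c) : I s (t • c) = |t| * I s c := by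
    simp only [I, polyOfCoords_smul, abs_mul, integral_const_mul]
  obtain ⟨C, hC, hle⟩ := exists_le_mul_of_homogeneous (hcont 4) (hcont 1) (hsmul 4) (hsmul 1)
    fun c hc => integral_abs_polyOfCoords_pos b hc
  refine ⟨C, hC, fun P hP => ?_⟩
  obtain ⟨c, rfl⟩ := exists_polyOfCoords_eq b hP
  have hlint (s : ℝ) :
      ∫⁻ x in cube 0 s, ENNReal.ofReal |polyOfCoords b c x| = ENNReal.ofReal (I s c) :=
    (ofReal_integral_eq_lintegral_ofReal
      ((continuous_polyOfCoords_apply b c).abs.continuousOn.integrableOn_compact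
        (isCompact_cube 0 s)) (ae_of_all _ fun _ => abs_nonneg _)).symm
  rw [hlint, hlint, ← ENNReal.ofReal_mul hC.le]
  exact ENNReal.ofReal_le_ofReal (hle c)

lemma exists_lintegral_cube_le_of_subset (d n : ℕ) : ∃ C : ℝ, 0 < C ∧
    ∀ (x₁ x₂ : EuclideanSpace ℝ (Fin d)) (l₁ l₂ : ℝ), 0 < l₁ → cube x₂ l₂ ⊆ cube x₁ (4 * l₁) →
      ∀ P ∈ PolyLE d n, ∫⁻ x in cube x₂ l₂, ENNReal.ofReal |P x| ≤
        ENNReal.ofReal C * ∫⁻ x in cube x₁ l₁, ENNReal.ofReal |P x| := by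
  obtain ⟨C, hC, hle⟩ := exists_lintegral_cube_four_le d n
  refine ⟨C, hC, fun x₁ x₂ l₁ l₂ hl₁ hsub P hP => ?_⟩
  have hg : Measurable fun x => ENNReal.ofReal |P x| :=
    (continuous_of_mem_polyLE hP).abs.measurable.ennreal_ofReal
  calc ∫⁻ x in cube x₂ l₂, ENNReal.ofReal |P x|
      ≤ ∫⁻ x in cube x₁ (l₁ * 4), ENNReal.ofReal |P x| :=
        lintegral_mono_set (by rwa [mul_comm])
    _ = ENNReal.ofReal (l₁ ^ d) * ∫⁻ y in cube 0 4, ENNReal.ofReal |P (x₁ + l₁ • y)| :=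
        setLIntegral_cube_eq_rescale x₁ hl₁ 4 hg
    _ ≤ ENNReal.ofReal (l₁ ^ d) *
          (ENNReal.ofReal C * ∫⁻ y in cube 0 1, ENNReal.ofReal |P (x₁ + l₁ • y)|) := by
        gcongr
        exact hle _ (comp_affine_mem_polyLE hP x₁ l₁)
    _ = ENNReal.ofReal C *
          (ENNReal.ofReal (l₁ ^ d) * ∫⁻ y in cube 0 1, ENNReal.ofReal |P (x₁ + l₁ • y)|) := by
        ring
    _ = ENNReal.ofReal C * ∫⁻ x in cube x₁ l₁, ENNReal.ofReal |P x| := by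
        rw [← setLIntegral_cube_eq_rescale x₁ hl₁ 1 hg, mul_one]

lemma zygSeminorm_fin_zero (ω : ℝ → ℝ) (n : ℕ) (D : Set (EuclideanSpace ℝ (Fin 0)))
    (f : EuclideanSpace ℝ (Fin 0) → ℝ) : zygSeminorm ω n D f = 0 := by
  refine le_antisymm (iSup_le fun x₀ => iSup_le fun l => iSup_le fun _ => iSup_le fun _ => ?_)
    bot_le
  refine iInf₂_le_of_le (fun _ => f x₀) (const_mem_polyLE _) (le_of_eq ?_)
  have hzero : (fun x => ENNReal.ofReal |f x - f x₀|) = 0 :=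
    funext fun x => by simp [Subsingleton.elim x x₀]
  simp only [hzero, lintegral_zero_fun, mul_zero]

lemma lintegral_abs_sub_le {α : Type*} [MeasurableSpace α] {μ : Measure α} {f g h : α → ℝ}
    (hfg : AEMeasurable (fun x => f x - g x) μ) :
    ∫⁻ x, ENNReal.ofReal |g x - h x| ∂μ ≤
      ∫⁻ x, ENNReal.ofReal |f x - g x| ∂μ + ∫⁻ x, ENNReal.ofReal |f x - h x| ∂μ := by
  rw [← lintegral_add_left' hfg.abs.ennreal_ofReal]
  refine lintegral_mono fun x => ?_
  rw [← ENNReal.ofReal_add (abs_nonneg _) (abs_nonneg _), abs_sub_comm (f x)]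
  exact ENNReal.ofReal_le_ofReal (abs_sub_le _ _ _)

section NearBest

variable {ω : ℝ → ℝ} {D : Set (EuclideanSpace ℝ (Fin d))} {f : EuclideanSpace ℝ (Fin d) → ℝ}
  {C₀ : ℝ} {x₁ x₂ : EuclideanSpace ℝ (Fin d)} {l₁ l₂ : ℝ} {P : EuclideanSpace ℝ (Fin d) → ℝ}

lemma IsNearBestApprox.lintegral_le (hP : IsNearBestApprox ω n D f C₀ x₁ l₁ P) (hl₁ : 0 < l₁) :
    ∫⁻ x in cube x₁ l₁, ENNReal.ofReal |f x - P x| ≤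
      ENNReal.ofReal (l₁ ^ d) * ENNReal.ofReal (C₀ * ω l₁) * zygSeminorm ω n D f := by
  rw [mul_assoc, ← ENNReal.inv_mul_le_iff (ENNReal.ofReal_pos.2 (by positivity)).ne'
    ENNReal.ofReal_ne_top]
  exact hP.2

lemma IsNearBestApprox.lintegral_le_of_subset (hP : IsNearBestApprox ω n D f C₀ x₁ l₁ P)
    (hω : MonotoneOn ω (Ici 0)) (hC₀ : 0 ≤ C₀) (hl₁ : 0 < l₁) (hsub : cube x₁ l₁ ⊆ cube x₂ l₂) :
    ∫⁻ x in cube x₁ l₁, ENNReal.ofReal |f x - P x| ≤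
      ENNReal.ofReal (l₂ ^ d) * ENNReal.ofReal (C₀ * ω l₂) * zygSeminorm ω n D f := by
  refine (hP.lintegral_le hl₁).trans ?_
  -- In dimension 0 every cube is the one-point space, so `l₁ ≤ l₂` need not hold;
  -- instead the seminorm vanishes.
  rcases d.eq_zero_or_pos with rfl | hd
  · simp [zygSeminorm_fin_zero]
  have hl : l₁ ≤ l₂ := le_of_cube_subset_cube hd hl₁.le hsub
  gcongr
  exact hω hl₁.le (hl₁.le.trans hl) hl

end NearBest

end Development

/-- Near best approximation polynomials on nested cubes `Q₁ ⊆ Q₂ ⊆ 4Q₁` differ in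
average by at most `C ω(ℓ₂) ‖f‖_{ω,D}`. -/
theorem statement_8 {d : ℕ} (n : ℕ) (ω : ℝ → ℝ) (hω : IsModulusOfOrder ω n)
    (C₀ : ℝ) (hC₀ : 0 < C₀) :
    ∃ C : ℝ, 0 < C ∧
      ∀ (D : Set (EuclideanSpace ℝ (Fin d))), IsOpen D → IsConnected D →
        ∀ f : EuclideanSpace ℝ (Fin d) → ℝ,
          LocallyIntegrableOn f D → zygSeminorm ω n D f < ⊤ →
          ∀ (x₁ x₂ : EuclideanSpace ℝ (Fin d)) (l₁ l₂ : ℝ), 0 < l₁ → 0 < l₂ →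
            cube x₁ l₁ ⊆ cube x₂ l₂ → cube x₂ l₂ ⊆ cube x₁ (4 * l₁) →
            cube x₂ l₂ ⊆ D →
            ∀ P₁ P₂ : EuclideanSpace ℝ (Fin d) → ℝ,
              IsNearBestApprox ω n D f C₀ x₁ l₁ P₁ →
              IsNearBestApprox ω n D f C₀ x₂ l₂ P₂ →
              (ENNReal.ofReal (l₂ ^ d))⁻¹ *
                  ∫⁻ x in cube x₂ l₂, ENNReal.ofReal |P₁ x - P₂ x| ≤
                ENNReal.ofReal (C * ω l₂) * zygSeminorm ω n D f := by
  obtain ⟨A, hA, hcompare⟩ := exists_lintegral_cube_le_of_subset d n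
  refine ⟨2 * A * C₀, by positivity, ?_⟩
  intro D _ _ f hf _ x₁ x₂ l₁ l₂ hl₁ hl₂ h₁₂ h₂₁ hD P₁ P₂ hP₁ hP₂
  set a := ENNReal.ofReal (l₂ ^ d)
  set B := a * ENNReal.ofReal (C₀ * ω l₂) * zygSeminorm ω n D f
  have hmeas : AEMeasurable (fun x => f x - P₁ x) (volume.restrict (cube x₁ l₁)) :=
    (hf.integrableOn_compact_subset (h₁₂.trans hD) (isCompact_cube _ _)).aemeasurable.sub
      (continuous_of_mem_polyLE hP₁.1).aemeasurable
  have hQ₁ : ∫⁻ x in cube x₁ l₁, ENNReal.ofReal |P₁ x - P₂ x| ≤ 2 * B :=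
    calc _ ≤ _ := lintegral_abs_sub_le hmeas
      _ ≤ B + B := add_le_add (hP₁.lintegral_le_of_subset hω.monotoneOn hC₀.le hl₁ h₁₂)
          ((lintegral_mono_set h₁₂).trans
            (hP₂.lintegral_le_of_subset hω.monotoneOn hC₀.le hl₂ subset_rfl))
      _ = 2 * B := (two_mul B).symm
  have ha : a⁻¹ * a = 1 := ENNReal.inv_mul_cancel (ENNReal.ofReal_pos.2 (by positivity)).ne'
    ENNReal.ofReal_ne_top
  calc a⁻¹ * ∫⁻ x in cube x₂ l₂, ENNReal.ofReal |P₁ x - P₂ x|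
      ≤ a⁻¹ * (ENNReal.ofReal A * (2 * B)) := by
        gcongr
        exact (hcompare x₁ x₂ l₁ l₂ hl₁ h₂₁ _ (sub_mem_polyLE hP₁.1 hP₂.1)).trans (by gcongr)
    _ = (a⁻¹ * a) * (2 * ENNReal.ofReal A * ENNReal.ofReal (C₀ * ω l₂)) *
          zygSeminorm ω n D f := by ring
    _ = ENNReal.ofReal (2 * A * C₀ * ω l₂) * zygSeminorm ω n D f := by
        rw [ha, one_mul, mul_assoc (2 * A), ENNReal.ofReal_mul (p := 2 * A) (by positivity),
          ENNReal.ofReal_mul zero_le_two, ENNReal.ofReal_ofNat]
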